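/- arXiv:0911.3195 — 4 statements merged into one kernel-verified Lean document; each statement's English description precedes it below -/
import Mathlib

section
/- There exists a constant β > 0 such that the following holds. For every finite simple connected undirected graph G with m edges in which every vertex has degree at least 1, for every pair of vertices x, y and every natural number t with t ≤ β·m², the expected number of visits to y by the lazy simple random walk of length t started at x satisfies E[N_t^x(y)] = Σ_{i=0}^{t} Q^i(x,y) ≤ 8·d(y)·√(t+1), where Q^i denotes the i-th power of the lazy transition matrix. -/
open Finset

section Defs

variable {V : Type} [Fintype V] [DecidableEq V]

/-- Transition kernel of the lazy simple random walk on `G`. -/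
noncomputable def lazyStep (G : SimpleGraph V) [DecidableRel G.Adj] (u v : V) : ℝ :=
  if u = v then 1 / 2 else if G.Adj u v then 1 / (2 * (G.degree u : ℝ)) else 0

/-- Transition matrix of the lazy simple random walk on `G`. -/
noncomputable def lazyMatrix (G : SimpleGraph V) [DecidableRel G.Adj] : Matrix V V ℝ :=
  fun u v => lazyStep G u v

/-- Law (probability mass function) of the lazy random walk of length `t` started at `x`,
as a function on trajectories `Fin (t+1) → V`. -/
noncomputable def lazyWalkLaw (G : SimpleGraph V) [DecidableRel G.Adj] (x : V) (t : ℕ)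
    (f : Fin (t + 1) → V) : ℝ :=
  (if f 0 = x then 1 else 0) * ∏ i : Fin t, lazyStep G (f i.castSucc) (f i.succ)

/-- Expectation of a random variable `N` of the trajectory, under the lazy walk law. -/
noncomputable def lazyWalkExp (G : SimpleGraph V) [DecidableRel G.Adj] (x : V) (t : ℕ)
    (N : (Fin (t + 1) → V) → ℝ) : ℝ :=
  ∑ f : Fin (t + 1) → V, lazyWalkLaw G x t f * N f

/-- Number of indices `0 ≤ i ≤ t` at which the trajectory `f` visits `y`. -/
def visits (y : V) {t : ℕ} (f : Fin (t + 1) → V) : ℕ :=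
  (Finset.univ.filter fun i => f i = y).card

end Defs

/-!
The expectation identity holds because the time-`i` marginal of the walk law is `Q^i(x,·)`.

For the bound, let `ρₖ = Q^k(·,w) / d(w)` be the density at time `k` of the walk from `w` with
respect to the degree measure, and `bₖ = ⟪ρₖ, ρₖ⟫ = Q^{2k}(w,w) / d(w)` in the degree-weighted inner
product. Laziness gives `b_{k+1} ≤ bₖ - E(ρₖ)/4`, where `E` sums squared differences over darts.
Let `M = max ρₖ`. Either `ρₖ > M/2` everywhere, and then `bₖ ≤ M ≤ 1/m`; or a path descends from
the maximum to a vertex where `ρₖ ≤ M/2`, the drop `M/2` is carried by the at most `2/M` darts of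
the path starting in `{ρₖ > M/2}`, and Cauchy–Schwarz gives `E(ρₖ) ≥ M³/4 ≥ bₖ³/4`. This recursion
yields `(k+1) bₖ² ≤ 8` while `k + 1 ≤ 8m²`. Reversibility writes `Q^i(x,y) / d(y)` as
`⟪ρ^x_a, ρ^y_{i-a}⟫` with `a = ⌊i/2⌋`, so `Q^i(x,y) ≤ 4 d(y) / √(i+1)`, and the sum over `i ≤ t`
is at most `8 d(y) √(t+1)`.
-/

open Matrix

namespace SimpleGraph

-- Telescope `max f α` along the walk: darts starting at or below `α` contribute no drop.
lemma Walk.sub_le_sum_darts_filter {V : Type} {G : SimpleGraph V} {u z : V} (p : G.Walk u z)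
    (f : V → ℝ) {α : ℝ} (hz : f z ≤ α) :
    f u - α ≤ ((p.darts.filter fun d => α < f d.fst).map fun d => |f d.fst - f d.snd|).sum := by
  induction p with
  | nil => simpa using hz
  | @cons u u' z h p ih =>
    have hrest := ih hz
    have hnonneg : 0 ≤ ((p.darts.filter fun d => α < f d.fst).map
        fun d => |f d.fst - f d.snd|).sum :=
      List.sum_nonneg fun x hx => by
        obtain ⟨d, -, rfl⟩ := List.mem_map.1 hx
        exact abs_nonneg _
    by_cases hu : α < f u
    · simp only [Walk.darts_cons, List.filter_cons, hu, decide_true, if_true, List.map_cons,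
        List.sum_cons]
      linarith [le_abs_self (f u - f u')]
    · simp only [Walk.darts_cons, List.filter_cons, hu, decide_false, Bool.false_eq_true,
        if_false]
      linarith

variable {V : Type} [Fintype V] (G : SimpleGraph V) [DecidableRel G.Adj]

lemma sum_darts_eq_sum_sum_neighborFinset {M : Type*} [AddCommMonoid M] (F : V → V → M) :
    ∑ d : G.Dart, F d.fst d.snd = ∑ v, ∑ u ∈ G.neighborFinset v, F v u := by
  rw [Finset.sum_sigma']
  refine Finset.sum_bij' (fun d _ => ⟨d.fst, d.snd⟩) (fun s hs => ⟨(s.1, s.2), by simpa using hs⟩)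
    (by simp) (by simp) (by simp) (by simp) (by simp)

lemma sum_sum_neighborFinset_eq_sum_degree_mul (g : V → ℝ) :
    ∑ v, ∑ u ∈ G.neighborFinset v, g u = ∑ u, (G.degree u : ℝ) * g u := by
  simp_rw [neighborFinset_eq_filter, Finset.sum_filter]
  rw [Finset.sum_comm]
  refine Finset.sum_congr rfl fun u _ => ?_
  simp_rw [G.adj_comm _ u]
  rw [← Finset.sum_filter, Finset.sum_const, ← neighborFinset_eq_filter,
    card_neighborFinset_eq_degree, nsmul_eq_mul]

def dartEnergy (f : V → ℝ) : ℝ := ∑ d : G.Dart, (f d.fst - f d.snd) ^ 2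

def degreeInner (f g : V → ℝ) : ℝ := ∑ v, (G.degree v : ℝ) * (f v * g v)

variable {G}

lemma dartEnergy_nonneg (f : V → ℝ) : 0 ≤ G.dartEnergy f :=
  Finset.sum_nonneg fun _ _ => sq_nonneg _

lemma Walk.IsPath.two_mul_sq_sub_le_card_mul_dartEnergy [DecidableEq V] {u z : V}
    {p : G.Walk u z} (hp : p.IsPath) {f : V → ℝ} {α : ℝ} (hz : f z ≤ α) (hu : α ≤ f u) :
    2 * (f u - α) ^ 2 ≤ #{v | α < f v} * G.dartEnergy f := by
  set L := p.darts.filter fun d => α < f d.fst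
  set S := L.toFinset
  have hdarts : p.darts.Nodup := Walk.darts_nodup_of_support_nodup hp.support_nodup
  have hmem : ∀ d, d ∈ S ↔ d ∈ p.darts ∧ α < f d.fst := by simp [S, L]
  have hsum : f u - α ≤ ∑ d ∈ S, |f d.fst - f d.snd| := by
    rw [List.sum_toFinset _ (hdarts.filter _)]
    exact p.sub_le_sum_darts_filter f hz
  have hcard : #S ≤ #{v | α < f v} := by
    refine Finset.card_le_card_of_injOn (·.fst) (fun d hd => ?_) fun d hd d' hd' h => ?_
    · simpa using ((hmem d).1 hd).2
    · rw [Finset.mem_coe, hmem] at hd hd'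
      have hfst : (p.darts.map (·.fst)).Nodup := by
        rw [Walk.map_fst_darts]; exact hp.support_nodup.sublist (List.dropLast_sublist _)
      exact List.inj_on_of_nodup_map hfst hd.1 hd'.1 h
  have hdisj : Disjoint S (S.map ⟨Dart.symm, Dart.symm_involutive.injective⟩) := by
    refine Finset.disjoint_left.2 fun d hd hd' => ?_
    obtain ⟨e, he, rfl⟩ := Finset.mem_map.1 hd'
    rw [hmem] at hd he
    have hedges : (p.darts.map Dart.edge).Nodup := hp.edges_nodup
    exact e.symm_ne (List.inj_on_of_nodup_map hedges hd.1 he.1 e.edge_symm)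
  have henergy : 2 * ∑ d ∈ S, (f d.fst - f d.snd) ^ 2 ≤ G.dartEnergy f := by
    have hswap : ∑ d ∈ S.map ⟨Dart.symm, Dart.symm_involutive.injective⟩,
        (f d.fst - f d.snd) ^ 2 = ∑ d ∈ S, (f d.fst - f d.snd) ^ 2 := by
      rw [Finset.sum_map]
      exact Finset.sum_congr rfl fun d _ => by simp [abs_sub_comm, ← sq_abs]
    rw [two_mul, ← congrArg (_ + ·) hswap, ← Finset.sum_union hdisj, dartEnergy]
    exact Finset.sum_le_univ_sum_of_nonneg fun _ => sq_nonneg _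
  have hcs : (∑ d ∈ S, |f d.fst - f d.snd|) ^ 2 ≤ #S * ∑ d ∈ S, (f d.fst - f d.snd) ^ 2 := by
    simpa only [sq_abs] using sq_sum_le_card_mul_sum_sq (s := S) (f := fun d => |f d.fst - f d.snd|)
  calc 2 * (f u - α) ^ 2 ≤ 2 * (∑ d ∈ S, |f d.fst - f d.snd|) ^ 2 := by
        gcongr
    _ ≤ #S * (2 * ∑ d ∈ S, (f d.fst - f d.snd) ^ 2) := by linarith
    _ ≤ #{v | α < f v} * G.dartEnergy f := by
        gcongr

lemma degreeInner_self_nonneg (f : V → ℝ) : 0 ≤ G.degreeInner f f :=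
  Finset.sum_nonneg fun _ _ => mul_nonneg (Nat.cast_nonneg _) (mul_self_nonneg _)

lemma degreeInner_le_add_div_two (f g : V → ℝ) :
    G.degreeInner f g ≤ (G.degreeInner f f + G.degreeInner g g) / 2 := by
  simp only [SimpleGraph.degreeInner, ← Finset.sum_add_distrib, Finset.sum_div]
  exact Finset.sum_le_sum fun v _ => by
    have := mul_nonneg (Nat.cast_nonneg (G.degree v) : (0 : ℝ) ≤ G.degree v)
      (sq_nonneg (f v - g v))
    nlinarith

lemma degreeInner_self_le_of_le {f : V → ℝ} (hf : ∀ v, 0 ≤ f v)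
    (hmass : ∑ v, (G.degree v : ℝ) * f v = 1) {M : ℝ} (hM : ∀ v, f v ≤ M) :
    G.degreeInner f f ≤ M := by
  calc G.degreeInner f f = ∑ v, (G.degree v : ℝ) * f v * f v := by
        simp only [degreeInner, mul_assoc]
    _ ≤ ∑ v, (G.degree v : ℝ) * f v * M :=
        Finset.sum_le_sum fun v _ => by
          gcongr; exacts [mul_nonneg (Nat.cast_nonneg _) (hf v), hM v]
    _ = M := by rw [← Finset.sum_mul, hmass, one_mul]

lemma degreeInner_self_le_or_cube_le_dartEnergy [DecidableEq V] (hconn : G.Connected)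
    (hdeg : ∀ v, 0 < G.degree v) {f : V → ℝ} (hf : ∀ v, 0 ≤ f v)
    (hmass : ∑ v, (G.degree v : ℝ) * f v = 1) :
    G.degreeInner f f ≤ 1 / #G.edgeFinset ∨ G.degreeInner f f ^ 3 / 4 ≤ G.dartEnergy f := by
  have := hconn.nonempty
  obtain ⟨x₀, hmax⟩ := Finite.exists_max f
  set M := f x₀
  have hinner := degreeInner_self_le_of_le hf hmass hmax
  by_cases hlow : ∃ z, f z ≤ M / 2
  · right
    obtain ⟨z, hz⟩ := hlow
    obtain ⟨p, hp⟩ := (hconn.preconnected x₀ z).some.toPath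
    have hpath := hp.two_mul_sq_sub_le_card_mul_dartEnergy hz (by linarith [hf z])
    have hM : 0 ≤ M := by linarith [hf z]
    have hcard : #{v | M / 2 < f v} * (M / 2) ≤ 1 := by
      calc #{v | M / 2 < f v} * (M / 2) = ∑ v with M / 2 < f v, M / 2 := by
            rw [Finset.sum_const, nsmul_eq_mul]
        _ ≤ ∑ v with M / 2 < f v, (G.degree v : ℝ) * f v :=
            Finset.sum_le_sum fun v hv => by
              have h1 : (1 : ℝ) ≤ G.degree v := by exact_mod_cast hdeg v
              nlinarith [(Finset.mem_filter.1 hv).2, hf v]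
        _ ≤ ∑ v, (G.degree v : ℝ) * f v :=
            Finset.sum_le_univ_sum_of_nonneg fun v => mul_nonneg (Nat.cast_nonneg _) (hf v)
        _ = 1 := hmass
    calc G.degreeInner f f ^ 3 / 4 ≤ M ^ 3 / 4 := by
          gcongr; exact degreeInner_self_nonneg f
      _ = M / 2 * (2 * (M - M / 2) ^ 2) := by ring
      _ ≤ M / 2 * (#{v | M / 2 < f v} * G.dartEnergy f) := by gcongr
      _ ≤ G.dartEnergy f := by nlinarith [dartEnergy_nonneg (G := G) f]
  · left
    simp only [not_exists, not_le] at hlow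
    have hm : (0 : ℝ) < #G.edgeFinset := by
      exact_mod_cast (hdeg x₀).trans_le (G.degree_le_card_edgeFinset x₀)
    have hsum : M / 2 * (2 * #G.edgeFinset) ≤ 1 := by
      rw [← hmass, ← (by exact_mod_cast G.sum_degrees_eq_twice_card_edges :
        ∑ v, (G.degree v : ℝ) = 2 * #G.edgeFinset), Finset.mul_sum]
      exact Finset.sum_le_sum fun v _ => by
        rw [mul_comm]; gcongr; exact (hlow v).le
    rw [le_div_iff₀ hm]
    nlinarith

end SimpleGraph

lemma le_or_add_mul_sq_le_of_cubic_decrease {b : ℕ → ℝ} {c : ℝ} (hnonneg : ∀ k, 0 ≤ b k)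
    (hanti : Antitone b) (h0 : b 0 ≤ 1) (hstep : ∀ k, b k ≤ c ∨ b (k + 1) ≤ b k - b k ^ 3 / 16)
    (k : ℕ) : b k ≤ c ∨ (k + 8) * b k ^ 2 ≤ 8 := by
  induction k with
  | zero =>
    right
    simp only [Nat.cast_zero, zero_add]
    nlinarith [hnonneg 0]
  | succ k ih =>
    rcases ih with h | h
    · exact .inl ((hanti k.le_succ).trans h)
    rcases hstep k with h' | h'
    · exact .inl ((hanti k.le_succ).trans h')
    right
    have hk : (0 : ℝ) ≤ k := Nat.cast_nonneg k
    set s := b k ^ 2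
    have hs0 : 0 ≤ s := sq_nonneg _
    have hs1 : s ≤ 1 := by nlinarith
    have hsq : b (k + 1) ^ 2 ≤ s * (1 - s / 16) ^ 2 := by
      calc b (k + 1) ^ 2 ≤ (b k - b k ^ 3 / 16) ^ 2 := pow_le_pow_left₀ (hnonneg _) h' 2
        _ = s * (1 - s / 16) ^ 2 := by ring
    -- `8 - (8 + s) (1 - s / 16) ^ 2 = s ^ 2 (24 - s) / 256 ≥ 0`
    calc ((k + 1 : ℕ) + 8 : ℝ) * b (k + 1) ^ 2 ≤ (k + 9) * (s * (1 - s / 16) ^ 2) := by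
          push_cast; rw [show (k : ℝ) + 1 + 8 = k + 9 by ring]; gcongr
      _ ≤ (8 + s) * (1 - s / 16) ^ 2 := by nlinarith [sq_nonneg (1 - s / 16)]
      _ ≤ 8 := by nlinarith [mul_nonneg (sq_nonneg s) (by linarith : (0 : ℝ) ≤ 24 - s)]

lemma sum_range_one_div_sqrt_succ_le (n : ℕ) :
    ∑ i ∈ Finset.range n, 1 / √((i : ℝ) + 1) ≤ 2 * √(n : ℝ) := by
  have hterm : ∀ i : ℕ, 1 / √((i : ℝ) + 1) ≤ 2 * √((i + 1 : ℕ) : ℝ) - 2 * √(i : ℝ) := by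
    intro i
    have ha : 0 < √((i : ℝ) + 1) := Real.sqrt_pos.2 (by positivity)
    have ha2 := Real.sq_sqrt (by positivity : (0 : ℝ) ≤ i + 1)
    have hb2 := Real.sq_sqrt (Nat.cast_nonneg i : (0 : ℝ) ≤ i)
    push_cast
    rw [div_le_iff₀ ha]
    nlinarith [sq_nonneg (√((i : ℝ) + 1) - √(i : ℝ)), Real.sqrt_nonneg (i : ℝ)]
  calc ∑ i ∈ Finset.range n, 1 / √((i : ℝ) + 1)
      ≤ ∑ i ∈ Finset.range n, (2 * √((i + 1 : ℕ) : ℝ) - 2 * √(i : ℝ)) :=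
        Finset.sum_le_sum fun i _ => hterm i
    _ = 2 * √(n : ℝ) := by
        rw [Finset.sum_range_sub (fun i : ℕ => 2 * √(i : ℝ))]
        simp

lemma visits_eq_sum {V : Type} [DecidableEq V] (y : V) {t : ℕ} (f : Fin (t + 1) → V) :
    (visits y f : ℝ) = ∑ i, if f i = y then 1 else 0 := by
  simp only [visits, Finset.card_filter, Nat.cast_sum, Nat.cast_ite, Nat.cast_one, Nat.cast_zero]

section LazyWalk

variable {V : Type} [Fintype V] [DecidableEq V] (G : SimpleGraph V) [DecidableRel G.Adj]

lemma lazyStep_nonneg (u v : V) : 0 ≤ lazyStep G u v := by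
  unfold lazyStep
  split_ifs <;> positivity

lemma lazyMatrix_mulVec_apply (f : V → ℝ) (u : V) :
    (lazyMatrix G *ᵥ f) u = f u / 2 + (∑ v ∈ G.neighborFinset u, f v) / (2 * G.degree u) := by
  have hsplit : ∀ v, lazyStep G u v * f v =
      (if u = v then f v / 2 else 0) + if G.Adj u v then f v / (2 * G.degree u) else 0 := by
    intro v
    unfold lazyStep
    by_cases huv : u = v
    · subst huv; simp [div_eq_inv_mul]
    · by_cases hadj : G.Adj u v <;> simp [huv, hadj, div_eq_inv_mul]
  simp only [Matrix.mulVec, dotProduct, lazyMatrix, hsplit, Finset.sum_add_distrib,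
    Finset.sum_ite_eq, Finset.mem_univ, if_true, ← Finset.sum_filter,
    ← SimpleGraph.neighborFinset_eq_filter, Finset.sum_div]

lemma sum_lazyStep {u : V} (hu : 0 < G.degree u) : ∑ v, lazyStep G u v = 1 := by
  have h := lazyMatrix_mulVec_apply G 1 u
  simp only [Matrix.mulVec, dotProduct, lazyMatrix, Pi.one_apply, mul_one, Finset.sum_const,
    SimpleGraph.card_neighborFinset_eq_degree, nsmul_eq_mul] at h
  have hu' : (G.degree u : ℝ) ≠ 0 := by positivity
  rw [h]
  field_simp
  ring

lemma degree_mul_lazyStep_comm (u v : V) :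
    G.degree u * lazyStep G u v = G.degree v * lazyStep G v u := by
  unfold lazyStep
  by_cases huv : u = v
  · subst huv; rfl
  by_cases hadj : G.Adj u v
  · have hu : (G.degree u : ℝ) ≠ 0 := by
      exact_mod_cast (G.degree_pos_iff_exists_adj u).2 ⟨v, hadj⟩ |>.ne'
    have hv : (G.degree v : ℝ) ≠ 0 := by
      exact_mod_cast (G.degree_pos_iff_exists_adj v).2 ⟨u, hadj.symm⟩ |>.ne'
    simp [huv, Ne.symm huv, hadj, hadj.symm]
    field_simp
  · have hadj' : ¬G.Adj v u := fun h => hadj h.symm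
    simp [huv, Ne.symm huv, hadj, hadj']

lemma lazyMatrix_pow_nonneg (i : ℕ) (x y : V) : 0 ≤ (lazyMatrix G ^ i) x y := by
  induction i generalizing y with
  | zero => by_cases h : x = y <;> simp [h]
  | succ i ih =>
    rw [pow_succ, Matrix.mul_apply]
    exact Finset.sum_nonneg fun z _ => mul_nonneg (ih z) (lazyStep_nonneg G z y)

lemma sum_lazyMatrix_pow (hdeg : ∀ v, 0 < G.degree v) (i : ℕ) (x : V) :
    ∑ y, (lazyMatrix G ^ i) x y = 1 := by
  induction i generalizing x with
  | zero => simp [Matrix.one_apply]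
  | succ i ih =>
    simp only [pow_succ', Matrix.mul_apply, Finset.sum_comm (γ := V), ← Finset.mul_sum, ih,
      mul_one]
    exact sum_lazyStep G (hdeg x)

lemma degree_mul_lazyMatrix_pow_comm (i : ℕ) (x y : V) :
    G.degree x * (lazyMatrix G ^ i) x y = G.degree y * (lazyMatrix G ^ i) y x := by
  have hstep : SemiconjBy (Matrix.diagonal fun v => (G.degree v : ℝ)) (lazyMatrix G)
      (lazyMatrix G)ᵀ := by
    ext u v
    simp [Matrix.diagonal_mul, Matrix.mul_diagonal, lazyMatrix,
      degree_mul_lazyStep_comm G u v, mul_comm]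
  have h := congrFun (congrFun (hstep.pow_right i) x) y
  simp only [Matrix.diagonal_mul, Matrix.mul_diagonal, ← Matrix.transpose_pow,
    Matrix.transpose_apply] at h
  rw [h, mul_comm]

lemma lazyWalkLaw_snoc (x : V) (t : ℕ) (g : Fin (t + 1) → V) (v : V) :
    lazyWalkLaw G x (t + 1) (Fin.snoc g v)
      = lazyWalkLaw G x t g * lazyStep G (g (Fin.last t)) v := by
  simp only [lazyWalkLaw, Fin.prod_univ_castSucc, Fin.succ_castSucc, Fin.snoc_castSucc,
    Fin.succ_last, Fin.snoc_last, mul_assoc]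
  rfl

lemma sum_lazyWalkLaw_succ_mul (x : V) (t : ℕ) (F : (Fin (t + 2) → V) → ℝ) :
    ∑ f, lazyWalkLaw G x (t + 1) f * F f
      = ∑ g, lazyWalkLaw G x t g * ∑ v, lazyStep G (g (Fin.last t)) v * F (Fin.snoc g v) := by
  rw [← (Fin.snocEquiv fun _ => V).sum_comp, Fintype.sum_prod_type, Finset.sum_comm]
  refine Finset.sum_congr rfl fun g _ => ?_
  rw [Finset.mul_sum]
  refine Finset.sum_congr rfl fun v _ => ?_
  simp only [Fin.snocEquiv, Equiv.coe_fn_mk, lazyWalkLaw_snoc, mul_assoc]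

lemma sum_lazyWalkLaw_mul_ite (hrow : ∀ u, ∑ v, lazyStep G u v = 1) (x : V) (t : ℕ)
    (i : Fin (t + 1)) (y : V) :
    ∑ f, lazyWalkLaw G x t f * (if f i = y then 1 else 0) = (lazyMatrix G ^ (i : ℕ)) x y := by
  induction t generalizing y with
  | zero =>
    obtain rfl : i = 0 := Subsingleton.elim (α := Fin 1) _ _
    rw [← (Equiv.funUnique (Fin 1) V).symm.sum_comp]
    simp [lazyWalkLaw, Matrix.one_apply, eq_comm]
  | succ t ih =>
    rw [sum_lazyWalkLaw_succ_mul]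
    induction i using Fin.lastCases with
    | last =>
      have hlast : ∀ g : Fin (t + 1) → V, lazyStep G (g (Fin.last t)) y
          = ∑ z, (if g (Fin.last t) = z then 1 else 0) * lazyStep G z y := by
        intro g; simp
      simp only [Fin.snoc_last, mul_ite, mul_one, mul_zero, Finset.sum_ite_eq', Finset.mem_univ,
        if_true]
      simp only [hlast, Finset.mul_sum, ← mul_assoc]
      rw [Finset.sum_comm]
      simp only [← Finset.sum_mul, ih, Fin.val_last, pow_succ, Matrix.mul_apply]
      rfl
    | cast j =>
      simp only [Fin.snoc_castSucc, ← Finset.sum_mul, hrow, one_mul, Fin.val_castSucc]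
      exact ih j y

lemma lazyWalkExp_visits (hrow : ∀ u, ∑ v, lazyStep G u v = 1) (x y : V) (t : ℕ) :
    lazyWalkExp G x t (fun f => (visits y f : ℝ))
      = ∑ i ∈ Finset.range (t + 1), (lazyMatrix G ^ i) x y := by
  simp only [lazyWalkExp, visits_eq_sum, Finset.mul_sum]
  rw [Finset.sum_comm, ← Fin.sum_univ_eq_sum_range]
  exact Finset.sum_congr rfl fun i _ => sum_lazyWalkLaw_mul_ite G hrow x t i y

lemma degree_mul_sq_lazyMatrix_mulVec_le (f : V → ℝ) (v : V) :
    4 * (G.degree v * ((lazyMatrix G *ᵥ f) v * (lazyMatrix G *ᵥ f) v))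
        + ∑ u ∈ G.neighborFinset v, (f v - f u) ^ 2
      ≤ 2 * (G.degree v * (f v * f v)) + 2 * ∑ u ∈ G.neighborFinset v, f u ^ 2 := by
  rw [lazyMatrix_mulVec_apply]
  set S := ∑ u ∈ G.neighborFinset v, f u
  set T := ∑ u ∈ G.neighborFinset v, f u ^ 2
  set d : ℝ := (G.degree v : ℝ)
  have hcs : S ^ 2 ≤ d * T := by
    simpa [d, SimpleGraph.card_neighborFinset_eq_degree] using
      sq_sum_le_card_mul_sum_sq (s := G.neighborFinset v) (f := f)
  have hdiff : ∑ u ∈ G.neighborFinset v, (f v - f u) ^ 2 = d * (f v * f v) - 2 * f v * S + T := by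
    simp only [sub_sq, Finset.sum_add_distrib, Finset.sum_sub_distrib, Finset.sum_const,
      SimpleGraph.card_neighborFinset_eq_degree, nsmul_eq_mul, ← Finset.mul_sum, S, T, d]
    ring
  have hT : 0 ≤ T := Finset.sum_nonneg fun _ _ => sq_nonneg _
  rw [hdiff]
  rcases (show (0 : ℝ) ≤ d by positivity).eq_or_lt with hd | hd
  · have hS : S = 0 := by nlinarith [sq_nonneg S]
    rw [← hd, hS]
    linarith
  · have hsq : 4 * (d * ((f v / 2 + S / (2 * d)) * (f v / 2 + S / (2 * d))))
        = d * (f v * f v) + 2 * f v * S + S ^ 2 / d := by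
      field_simp
      ring
    have hST : S ^ 2 / d ≤ T := by rwa [div_le_iff₀ hd, mul_comm]
    linarith

lemma degreeInner_lazyMatrix_mulVec_self_le (f : V → ℝ) :
    G.degreeInner (lazyMatrix G *ᵥ f) (lazyMatrix G *ᵥ f)
      ≤ G.degreeInner f f - G.dartEnergy f / 4 := by
  have h := Finset.sum_le_sum fun v (_ : v ∈ Finset.univ) =>
    degree_mul_sq_lazyMatrix_mulVec_le G f v
  simp only [Finset.sum_add_distrib, ← Finset.mul_sum,
    G.sum_sum_neighborFinset_eq_sum_degree_mul] at h
  have hE : G.dartEnergy f = ∑ v, ∑ u ∈ G.neighborFinset v, (f v - f u) ^ 2 :=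
    G.sum_darts_eq_sum_sum_neighborFinset fun v u => (f v - f u) ^ 2
  have hsq : ∑ u, (G.degree u : ℝ) * f u ^ 2 = G.degreeInner f f :=
    Finset.sum_congr rfl fun u _ => by rw [sq]
  rw [hsq] at h
  unfold SimpleGraph.degreeInner at *
  linarith

noncomputable def walkDensity (w : V) (k : ℕ) (v : V) : ℝ :=
  (lazyMatrix G ^ k) v w / G.degree w

lemma walkDensity_nonneg (w : V) (k : ℕ) (v : V) : 0 ≤ walkDensity G w k v :=
  div_nonneg (lazyMatrix_pow_nonneg G k v w) (Nat.cast_nonneg _)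

lemma walkDensity_succ (w : V) (k : ℕ) :
    walkDensity G w (k + 1) = lazyMatrix G *ᵥ walkDensity G w k := by
  funext v
  simp only [walkDensity, pow_succ', Matrix.mul_apply, Matrix.mulVec, dotProduct,
    Finset.sum_div, mul_div_assoc]

lemma degree_mul_walkDensity {w : V} (hw : 0 < G.degree w) (k : ℕ) (v : V) :
    G.degree v * walkDensity G w k v = (lazyMatrix G ^ k) w v := by
  have hw' : (G.degree w : ℝ) ≠ 0 := by positivity
  rw [walkDensity, mul_div_assoc', degree_mul_lazyMatrix_pow_comm, mul_div_cancel_left₀ _ hw']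

lemma sum_degree_mul_walkDensity (hdeg : ∀ v, 0 < G.degree v) (w : V) (k : ℕ) :
    ∑ v, (G.degree v : ℝ) * walkDensity G w k v = 1 := by
  simp only [degree_mul_walkDensity G (hdeg w)]
  exact sum_lazyMatrix_pow G hdeg k w

lemma degreeInner_walkDensity {x : V} (hx : 0 < G.degree x) (y : V) (a b : ℕ) :
    G.degreeInner (walkDensity G x a) (walkDensity G y b)
      = (lazyMatrix G ^ (a + b)) x y / G.degree y := by
  simp only [SimpleGraph.degreeInner, ← mul_assoc, degree_mul_walkDensity G hx]
  simp only [walkDensity, mul_div_assoc', ← Finset.sum_div, pow_add, Matrix.mul_apply]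

lemma degreeInner_walkDensity_succ_le (w : V) (k : ℕ) :
    G.degreeInner (walkDensity G w (k + 1)) (walkDensity G w (k + 1))
      ≤ G.degreeInner (walkDensity G w k) (walkDensity G w k)
        - G.dartEnergy (walkDensity G w k) / 4 := by
  rw [walkDensity_succ]
  exact degreeInner_lazyMatrix_mulVec_self_le G _

lemma antitone_degreeInner_walkDensity (w : V) :
    Antitone fun k => G.degreeInner (walkDensity G w k) (walkDensity G w k) :=
  antitone_nat_of_succ_le fun k => (degreeInner_walkDensity_succ_le G w k).trans
    (sub_le_self _ (div_nonneg (G.dartEnergy_nonneg _) (by norm_num)))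

lemma lazyMatrix_pow_le_degree_mul_add (hdeg : ∀ v, 0 < G.degree v) (x y : V) (i : ℕ) :
    (lazyMatrix G ^ i) x y ≤ G.degree y * ((G.degreeInner (walkDensity G x (i / 2))
      (walkDensity G x (i / 2)) + G.degreeInner (walkDensity G y (i / 2))
      (walkDensity G y (i / 2))) / 2) := by
  have hy : (G.degree y : ℝ) ≠ 0 := by have := hdeg y; positivity
  have hsplit := degreeInner_walkDensity G (hdeg x) y (i / 2) (i - i / 2)
  rw [Nat.add_sub_cancel' (Nat.div_le_self i 2), eq_div_iff hy, mul_comm] at hsplit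
  rw [← hsplit]
  have hmono := antitone_degreeInner_walkDensity G y (show i / 2 ≤ i - i / 2 by omega)
  gcongr
  exact (G.degreeInner_le_add_div_two _ _).trans (by gcongr)

lemma add_one_mul_sq_degreeInner_walkDensity_le (hconn : G.Connected) (hdeg : ∀ v, 0 < G.degree v)
    (w : V) {k : ℕ} (hk : (k + 1 : ℝ) ≤ 8 * #G.edgeFinset ^ 2) :
    (k + 1) * G.degreeInner (walkDensity G w k) (walkDensity G w k) ^ 2 ≤ 8 := by
  set b := fun k => G.degreeInner (walkDensity G w k) (walkDensity G w k) with hb_def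
  have hm : (0 : ℝ) < #G.edgeFinset := by
    exact_mod_cast (hdeg w).trans_le (G.degree_le_card_edgeFinset w)
  have h0 : b 0 ≤ 1 := by
    have hw : (1 : ℝ) ≤ G.degree w := by exact_mod_cast hdeg w
    simp only [hb_def, degreeInner_walkDensity G (hdeg w), add_zero, pow_zero,
      Matrix.one_apply_eq]
    exact div_le_one_of_le₀ hw (by positivity)
  have hstep : ∀ k, b k ≤ 1 / #G.edgeFinset ∨ b (k + 1) ≤ b k - b k ^ 3 / 16 := fun k =>
    (G.degreeInner_self_le_or_cube_le_dartEnergy hconn hdeg (walkDensity_nonneg G w k)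
      (sum_degree_mul_walkDensity G hdeg w k)).imp_right fun h => by
        linarith [degreeInner_walkDensity_succ_le G w k]
  rcases le_or_add_mul_sq_le_of_cubic_decrease (fun k => G.degreeInner_self_nonneg _)
    (antitone_degreeInner_walkDensity G w) h0 hstep k with h | h
  · have hb : 0 ≤ b k := G.degreeInner_self_nonneg _
    calc (k + 1) * b k ^ 2 ≤ 8 * #G.edgeFinset ^ 2 * (1 / #G.edgeFinset) ^ 2 := by gcongr
      _ = 8 := by field_simp
  · nlinarith [sq_nonneg (b k)]

lemma lazyMatrix_pow_le_div_sqrt (hconn : G.Connected) (hdeg : ∀ v, 0 < G.degree v) (x y : V)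
    {i : ℕ} (hi : (i : ℝ) ≤ 8 * #G.edgeFinset ^ 2) :
    (lazyMatrix G ^ i) x y ≤ 4 * G.degree y / √((i : ℝ) + 1) := by
  have hm : (1 : ℝ) ≤ #G.edgeFinset := by
    exact_mod_cast (hdeg x).trans_le (G.degree_le_card_edgeFinset x)
  have hhalf : (2 * (i / 2 : ℕ) : ℝ) ≤ i := by exact_mod_cast Nat.mul_div_le i 2
  have hhalf' : (i : ℝ) + 1 ≤ 2 * ((i / 2 : ℕ) + 1) := by
    have : i + 1 ≤ 2 * (i / 2 + 1) := by omega
    exact_mod_cast this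
  have hk : ((i / 2 : ℕ) + 1 : ℝ) ≤ 8 * #G.edgeFinset ^ 2 := by nlinarith
  have hx := add_one_mul_sq_degreeInner_walkDensity_le G hconn hdeg x hk
  have hy := add_one_mul_sq_degreeInner_walkDensity_le G hconn hdeg y hk
  set bx := G.degreeInner (walkDensity G x (i / 2)) (walkDensity G x (i / 2))
  set byy := G.degreeInner (walkDensity G y (i / 2)) (walkDensity G y (i / 2))
  have hs : (bx + byy) / 2 * √((i : ℝ) + 1) ≤ 4 := by
    have hsqrt := Real.sq_sqrt (by positivity : (0 : ℝ) ≤ i + 1)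
    have hbx : 0 ≤ bx := G.degreeInner_self_nonneg _
    have hby : 0 ≤ byy := G.degreeInner_self_nonneg _
    nlinarith [Real.sqrt_nonneg ((i : ℝ) + 1), sq_nonneg (bx - byy),
      mul_nonneg (add_nonneg hbx hby) (Real.sqrt_nonneg ((i : ℝ) + 1))]
  have hpos : 0 < √((i : ℝ) + 1) := Real.sqrt_pos.2 (by positivity)
  calc (lazyMatrix G ^ i) x y ≤ G.degree y * ((bx + byy) / 2) :=
        lazyMatrix_pow_le_degree_mul_add G hdeg x y i
    _ ≤ G.degree y * (4 / √((i : ℝ) + 1)) :=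
        mul_le_mul_of_nonneg_left ((le_div_iff₀ hpos).2 hs) (Nat.cast_nonneg _)
    _ = 4 * G.degree y / √((i : ℝ) + 1) := by ring

end LazyWalk

/-- there is a constant `β > 0` such that for every finite simple connected
graph with minimum degree at least 1, every `x`, `y` and every `t ≤ β·m²`, the expected
number of visits to `y` of the lazy walk of length `t` from `x` equals
`∑_{i=0}^t Q^i(x,y)` and is at most `8·d(y)·√(t+1)`. -/
theorem statement_0 :
    ∃ β : ℝ, 0 < β ∧
      ∀ (V : Type) [Fintype V] [DecidableEq V] (G : SimpleGraph V) [DecidableRel G.Adj],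
        G.Connected → (∀ v : V, 1 ≤ G.degree v) →
        ∀ x y : V, ∀ t : ℕ,
          (t : ℝ) ≤ β * (G.edgeFinset.card : ℝ) ^ 2 →
          lazyWalkExp G x t (fun f => (visits y f : ℝ)) =
              ∑ i ∈ Finset.range (t + 1), ((lazyMatrix G) ^ i) x y ∧
            lazyWalkExp G x t (fun f => (visits y f : ℝ)) ≤
              8 * (G.degree y : ℝ) * Real.sqrt (t + 1) := by
  refine ⟨8, by norm_num, fun V _ _ G _ hconn hdeg x y t ht => ?_⟩
  have hexp := lazyWalkExp_visits G (fun u => sum_lazyStep G (hdeg u)) x y t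
  refine ⟨hexp, hexp ▸ ?_⟩
  calc ∑ i ∈ Finset.range (t + 1), (lazyMatrix G ^ i) x y
      ≤ ∑ i ∈ Finset.range (t + 1), 4 * G.degree y * (1 / √((i : ℝ) + 1)) :=
        Finset.sum_le_sum fun i hi => by
          have hit : (i : ℝ) ≤ t := by exact_mod_cast Finset.mem_range_succ_iff.1 hi
          rw [mul_one_div]
          exact lazyMatrix_pow_le_div_sqrt G hconn hdeg x y (hit.trans ht)
    _ ≤ 4 * G.degree y * (2 * √((t : ℝ) + 1)) := by
        rw [← Finset.mul_sum]
        gcongr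
        exact_mod_cast sum_range_one_div_sqrt_succ_le (t + 1)
    _ = 8 * G.degree y * √((t : ℝ) + 1) := by ring
end

section
/- Let λ', k, q be positive integers with k ≤ q. Let r_1, …, r_k be independent random variables, each uniformly distributed on {0, 1, …, λ'−1}, and set b_j = j·λ' + r_1 + ⋯ + r_j for 1 ≤ j ≤ k. Independently, let c_1, …, c_q be independent random variables where c_i is uniformly distributed on the i-th block {(i−1)λ'+1, …, iλ'}. Let i_1 < i_2 < ⋯ < i_k be positive integers with λ' ≤ i_1 ≤ 2λ'−1, λ' ≤ i_{j+1} − i_j ≤ 2λ'−1 for all 1 ≤ j ≤ k−1, and i_k ≤ q·λ'. Then Pr(b_j = i_j for all 1 ≤ j ≤ k) = (1/λ')^k, and this equals Pr({i_1, …, i_k} ⊆ {c_1, …, c_q}). -/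
open Finset

/-- Splitting `Iic` at a successor in `Fin k`. -/
lemma fin_Iic_succ {k m : ℕ} (h : m + 1 < k) :
    Finset.Iic (⟨m + 1, h⟩ : Fin k) =
      insert (⟨m + 1, h⟩ : Fin k) (Finset.Iic (⟨m, by omega⟩ : Fin k)) := by
  ext x
  simp only [Finset.mem_Iic, Finset.mem_insert, Fin.le_def, Fin.ext_iff]
  omega

lemma fin_Iic_zero {k : ℕ} (hk : 0 < k) :
    Finset.Iic (⟨0, hk⟩ : Fin k) = {(⟨0, hk⟩ : Fin k)} := by
  ext x
  simp only [Finset.mem_Iic, Finset.mem_singleton, Fin.le_def, Fin.ext_iff]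
  omega

/-- equality of the shifted-sampling and blockwise-sampling probabilities.
With `r : Fin k → Fin λ'` i.i.d. uniform (uniform counting measure on all such tuples),
the probability that `b_j = (j+1)·λ' + r_1 + ⋯ + r_{j+1}` hits the prescribed positions
`i_1 < ⋯ < i_k` equals `(1/λ')^k`, and this equals the probability (over `s : Fin q → Fin λ'`
i.i.d. uniform, `c_i = (i−1)·λ' + s_i + 1` being a uniform point of the `i`-th block) that
every `i_j` is among the `c_i`'s. -/
theorem statement_9 (lam k q : ℕ) (hlam : 0 < lam) (hk : 0 < k) (hq : 0 < q) (hkq : k ≤ q)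
    (idx : Fin k → ℕ) (hmono : StrictMono idx)
    (hfirst : lam ≤ idx ⟨0, hk⟩ ∧ idx ⟨0, hk⟩ ≤ 2 * lam - 1)
    (hgap : ∀ (j : ℕ) (hj : j + 1 < k),
      lam ≤ idx ⟨j + 1, hj⟩ - idx ⟨j, by omega⟩ ∧
        idx ⟨j + 1, hj⟩ - idx ⟨j, by omega⟩ ≤ 2 * lam - 1)
    (hlast : idx ⟨k - 1, by omega⟩ ≤ q * lam) :
    ((Finset.univ.filter fun r : Fin k → Fin lam =>
          ∀ j : Fin k, ((j : ℕ) + 1) * lam + ∑ i ∈ Finset.Iic j, ((r i : ℕ)) = idx j).card : ℝ)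
        / (lam : ℝ) ^ k = (1 / (lam : ℝ)) ^ k ∧
      ((Finset.univ.filter fun r : Fin k → Fin lam =>
          ∀ j : Fin k, ((j : ℕ) + 1) * lam + ∑ i ∈ Finset.Iic j, ((r i : ℕ)) = idx j).card : ℝ)
          / (lam : ℝ) ^ k =
        ((Finset.univ.filter fun s : Fin q → Fin lam =>
            ∀ j : Fin k, ∃ i : Fin q, (i : ℕ) * lam + (s i : ℕ) + 1 = idx j).card : ℝ)
          / (lam : ℝ) ^ q := by
  classical
  -- a total function version of idx
  obtain ⟨f, hfeq⟩ : ∃ f : ℕ → ℕ, ∀ (m : ℕ) (hm : m < k), f m = idx ⟨m, hm⟩ :=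
    ⟨fun m => if hm : m < k then idx ⟨m, hm⟩ else 0, fun m hm => dif_pos hm⟩
  have hfj : ∀ j : Fin k, f (j : ℕ) = idx j := by
    intro j
    rw [hfeq _ j.isLt]
  -- step bounds
  have hstep : ∀ m : ℕ, m + 1 < k → f m + lam ≤ f (m + 1) ∧ f (m + 1) ≤ f m + 2 * lam - 1 := by
    intro m hm
    rw [hfeq m (by omega), hfeq (m + 1) hm]
    have h1 := hgap m hm
    have h2 : idx ⟨m, by omega⟩ < idx ⟨m + 1, hm⟩ := hmono (by simp [Fin.lt_def])
    omega
  have hf0 : lam ≤ f 0 ∧ f 0 ≤ 2 * lam - 1 := by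
    rw [hfeq 0 hk]; exact hfirst
  -- lower bound
  have hlow : ∀ (m : ℕ), m < k → (m + 1) * lam ≤ f m := by
    intro m
    induction m with
    | zero => intro hm; simpa using hf0.1
    | succ n ih =>
        intro hm
        have h1 := (hstep n hm).1
        have h2 := ih (by omega)
        have hmul : (n + 1 + 1) * lam = (n + 1) * lam + lam := by ring
        omega
  -- chain lower bound
  have hchain : ∀ (m2 : ℕ), m2 < k → ∀ (m1 : ℕ), m1 < m2 → f m1 + lam ≤ f m2 := by
    intro m2
    induction m2 with
    | zero => intro _ m1 h; exact absurd h (Nat.not_lt_zero _)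
    | succ n ih =>
        intro hm2 m1 hm1
        have h1 := (hstep n hm2).1
        rcases Nat.lt_or_ge m1 n with h | h
        · have := ih (by omega) m1 h
          omega
        · have : m1 = n := by omega
          subst this
          omega
  -- the unique tuple realising the first event
  have hbd : ∀ m : ℕ, m < k →
      (if m = 0 then f 0 - lam else f m - f (m - 1) - lam) < lam := by
    intro m hm
    split_ifs with h
    · omega
    · obtain ⟨n, rfl⟩ : ∃ n, m = n + 1 := ⟨m - 1, by omega⟩
      have h1 := hstep n hm
      simp only [Nat.add_sub_cancel]
      omega
  obtain ⟨r0, hr0val⟩ : ∃ r0 : Fin k → Fin lam, ∀ (m : ℕ) (hm : m < k),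
      ((r0 ⟨m, hm⟩ : ℕ)) = if m = 0 then f 0 - lam else f m - f (m - 1) - lam :=
    ⟨fun j => ⟨if (j : ℕ) = 0 then f 0 - lam else f (j : ℕ) - f ((j : ℕ) - 1) - lam,
      hbd _ j.isLt⟩, fun m hm => rfl⟩
  -- r0 satisfies the conditions
  have hsat : ∀ (m : ℕ) (hm : m < k),
      (m + 1) * lam + ∑ i ∈ Finset.Iic (⟨m, hm⟩ : Fin k), ((r0 i : ℕ)) = idx ⟨m, hm⟩ := by
    intro m
    induction m with
    | zero =>
        intro hm
        rw [fin_Iic_zero hm, Finset.sum_singleton]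
        have e1 := hfeq 0 hm
        have e2 := hr0val 0 hm
        rw [if_pos rfl] at e2
        omega
    | succ n ih =>
        intro hm
        rw [fin_Iic_succ hm, Finset.sum_insert (by
          simp [Finset.mem_Iic, Fin.le_def])]
        have h2 := ih (by omega)
        have e1 := hfeq (n + 1) hm
        have e2 := hfeq n (by omega : n < k)
        have e3 := hr0val (n + 1) hm
        rw [if_neg (by omega)] at e3
        simp only [Nat.add_sub_cancel] at e3
        have h3 := (hstep n hm).1
        have hmul : (n + 1 + 1) * lam = (n + 1) * lam + lam := by ring
        omega
  -- part 2 : count the second filter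
  have hidxpos : ∀ j : Fin k, 1 ≤ idx j := by
    intro j
    have h1 := hlow (j : ℕ) j.isLt
    have h2 : lam ≤ ((j : ℕ) + 1) * lam := Nat.le_mul_of_pos_left lam (by omega)
    have h3 := hfj j
    omega
  have hidxle : ∀ j : Fin k, idx j ≤ q * lam := by
    intro j
    have hklt : k - 1 < k := by omega
    have hl : f (k - 1) ≤ q * lam := by
      rw [hfeq (k - 1) hklt]
      convert hlast using 3
    rcases Nat.lt_or_ge (j : ℕ) (k - 1) with h | h
    · have := hchain (k - 1) hklt (j : ℕ) h
      have h3 := hfj j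
      omega
    · have hje : (j : ℕ) = k - 1 := by have := j.isLt; omega
      have h3 := hfj j
      rw [hje] at h3
      omega
  have hBlt : ∀ j : Fin k, (idx j - 1) / lam < q := by
    intro j
    rw [Nat.div_lt_iff_lt_mul hlam]
    have h1 := hidxpos j
    have h2 := hidxle j
    omega
  obtain ⟨B, hBval⟩ : ∃ B : Fin k → Fin q, ∀ j : Fin k, (B j : ℕ) = (idx j - 1) / lam :=
    ⟨fun j => ⟨(idx j - 1) / lam, hBlt j⟩, fun j => rfl⟩
  obtain ⟨w, hwval⟩ : ∃ w : Fin k → Fin lam, ∀ j : Fin k, (w j : ℕ) = (idx j - 1) % lam :=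
    ⟨fun j => ⟨(idx j - 1) % lam, Nat.mod_lt _ hlam⟩, fun j => rfl⟩
  have hdecomp : ∀ j : Fin k, idx j = (B j : ℕ) * lam + (w j : ℕ) + 1 := by
    intro j
    rw [hBval j, hwval j]
    have h0 := Nat.div_add_mod (idx j - 1) lam
    have h1 := hidxpos j
    rw [Nat.mul_comm] at h0
    omega
  -- injectivity of B
  have hBinj : Function.Injective B := by
    have key : ∀ a b : Fin k, a < b → (B a : ℕ) < (B b : ℕ) := by
      intro a b hab
      have hc := hchain (b : ℕ) b.isLt (a : ℕ) hab
      rw [hfj a, hfj b] at hc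
      have h1 := hidxpos a
      rw [hBval a, hBval b]
      calc (idx a - 1) / lam < (idx a - 1) / lam + 1 := Nat.lt_succ_self _
        _ = (idx a - 1 + lam) / lam := by rw [Nat.add_div_right _ hlam]
        _ ≤ (idx b - 1) / lam := Nat.div_le_div_right (by omega)
    intro j1 j2 hEq
    by_contra hne
    rcases lt_or_gt_of_ne hne with h | h
    · exact absurd (hEq ▸ key j1 j2 h) (lt_irrefl _)
    · exact absurd (hEq ▸ key j2 j1 h) (lt_irrefl _)
  -- equivalence of the membership condition
  have hcondequiv : ∀ (s : Fin q → Fin lam) (j : Fin k),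
      (∃ i : Fin q, (i : ℕ) * lam + (s i : ℕ) + 1 = idx j) ↔ s (B j) = w j := by
    intro s j
    constructor
    · rintro ⟨i, hi⟩
      have hsi : (s i : ℕ) < lam := (s i).isLt
      have hpos := hidxpos j
      have hieq : (i : ℕ) = (B j : ℕ) := by
        have hdv : (idx j - 1) / lam = (i : ℕ) := by
          have he : idx j - 1 = (s i : ℕ) + (i : ℕ) * lam := by omega
          rw [he, Nat.add_mul_div_right _ _ hlam, Nat.div_eq_of_lt hsi]
          omega
        rw [hBval j]
        omega
      have hiB : i = B j := Fin.ext hieq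
      subst hiB
      apply Fin.ext
      have hd := hdecomp j
      omega
    · intro hs
      refine ⟨B j, ?_⟩
      rw [hs]
      exact (hdecomp j).symm
  -- the second filter via a piFinset
  obtain ⟨T, hTmem, hTuniv⟩ : ∃ T : Fin q → Finset (Fin lam),
      (∀ (j : Fin k), T (B j) = {w j}) ∧
        (∀ i : Fin q, (¬ ∃ j, B j = i) → T i = Finset.univ) := by
    refine ⟨fun i => if h : ∃ j, B j = i then {w h.choose} else Finset.univ, ?_, ?_⟩
    · intro j
      have h : ∃ j', B j' = B j := ⟨j, rfl⟩
      beta_reduce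
      rw [dif_pos h]
      exact congrArg (fun x => ({w x} : Finset (Fin lam))) (hBinj h.choose_spec)
    · intro i h
      beta_reduce
      rw [dif_neg h]
  have hfilter : (Finset.univ.filter fun s : Fin q → Fin lam =>
      ∀ j : Fin k, ∃ i : Fin q, (i : ℕ) * lam + (s i : ℕ) + 1 = idx j) =
      Fintype.piFinset T := by
    ext s
    simp only [Finset.mem_filter, Finset.mem_univ, true_and, Fintype.mem_piFinset]
    constructor
    · intro hs i
      by_cases h : ∃ j, B j = i
      · obtain ⟨j, rfl⟩ := h
        rw [hTmem j, Finset.mem_singleton]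
        exact (hcondequiv s j).mp (hs j)
      · rw [hTuniv i h]
        exact Finset.mem_univ _
    · intro hs j
      rw [hcondequiv s j]
      have := hs (B j)
      rw [hTmem j, Finset.mem_singleton] at this
      exact this
  have hcard2 : ∀ _ : Unit, (Finset.univ.filter fun s : Fin q → Fin lam =>
      ∀ j : Fin k, ∃ i : Fin q, (i : ℕ) * lam + (s i : ℕ) + 1 = idx j).card = lam ^ (q - k) := by
    intro _
    rw [hfilter, Fintype.card_piFinset]
    have hTcard : ∀ i : Fin q, (T i).card = if ∃ j, B j = i then 1 else lam := by
      intro i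
      split_ifs with h
      · obtain ⟨j, rfl⟩ := h
        rw [hTmem j, Finset.card_singleton]
      · rw [hTuniv i h, Finset.card_univ, Fintype.card_fin]
    rw [Finset.prod_congr rfl (fun i _ => hTcard i), Finset.prod_ite, Finset.prod_const,
      Finset.prod_const, one_pow, one_mul]
    congr 1
    have himg : Finset.univ.filter (fun i : Fin q => ∃ j, B j = i) = Finset.univ.image B := by
      ext i
      simp [Finset.mem_image]
    have h1 : (Finset.univ.filter (fun i : Fin q => ∃ j, B j = i)).card = k := by
      rw [himg, Finset.card_image_of_injective _ hBinj, Finset.card_univ, Fintype.card_fin]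
    have h2 := Finset.card_filter_add_card_filter_not
      (s := (Finset.univ : Finset (Fin q))) (p := fun i : Fin q => ∃ j, B j = i)
    simp only [Finset.card_univ, Fintype.card_fin] at h2
    omega
  -- the first filter is {r0}
  have hcard1 : ∀ _ : Unit, (Finset.univ.filter fun r : Fin k → Fin lam =>
      ∀ j : Fin k, ((j : ℕ) + 1) * lam + ∑ i ∈ Finset.Iic j, ((r i : ℕ)) = idx j).card = 1 := by
    intro _
    rw [Finset.card_eq_one]
    refine ⟨r0, ?_⟩
    ext r
    simp only [Finset.mem_filter, Finset.mem_univ, true_and, Finset.mem_singleton]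
    constructor
    · intro hcond
      funext j
      suffices H : ∀ (m : ℕ) (hm : m < k), r ⟨m, hm⟩ = r0 ⟨m, hm⟩ by
        have := H (j : ℕ) j.isLt
        simpa using this
      intro m hm
      match m with
      | 0 =>
          have h0 := hcond ⟨0, hm⟩
          rw [fin_Iic_zero hm] at h0
          simp only [Finset.sum_singleton, Fin.val_mk] at h0
          have e1 := hfeq 0 hm
          have e2 := hr0val 0 hm
          rw [if_pos rfl] at e2
          apply Fin.ext
          omega
      | n + 1 =>
          have h1 := hcond ⟨n + 1, hm⟩
          have h2 := hcond ⟨n, by omega⟩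
          rw [fin_Iic_succ hm, Finset.sum_insert (by
            simp [Finset.mem_Iic, Fin.le_def])] at h1
          simp only [Fin.val_mk] at h1 h2
          have e1 := hfeq (n + 1) hm
          have e2 := hfeq n (by omega : n < k)
          have e3 := hr0val (n + 1) hm
          rw [if_neg (by omega)] at e3
          simp only [Nat.add_sub_cancel] at e3
          have hmul : (n + 1 + 1) * lam = (n + 1) * lam + lam := by ring
          apply Fin.ext
          omega
    · intro hr j
      rw [hr]
      have := hsat (j : ℕ) j.isLt
      simpa using this
  -- part 1
  have part1 : ((Finset.univ.filter fun r : Fin k → Fin lam =>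
      ∀ j : Fin k, ((j : ℕ) + 1) * lam + ∑ i ∈ Finset.Iic j, ((r i : ℕ)) = idx j).card : ℝ)
        / (lam : ℝ) ^ k = (1 / (lam : ℝ)) ^ k := by
    rw [hcard1 ()]
    rw [div_pow, one_pow]
    norm_num
  refine ⟨part1, ?_⟩
  rw [part1, hcard2 ()]
  push_cast
  rw [div_pow, one_pow, div_eq_div_iff (by positivity) (by positivity), one_mul, ← pow_add]
  congr 1
  omega
end

section
/- Let λ' and q be positive integers, let a_1, …, a_{qλ'} be a sequence of elements of an arbitrary set S, and let x ∈ S. Let n_x = |{p : 1 ≤ p ≤ qλ', a_p = x}| be the number of appearances of x in the sequence. Let c_1, …, c_q be independent random variables where c_i is uniformly distributed on the i-th block {(i−1)λ'+1, …, iλ'}. Then for every real number R with R ≥ 6·n_x/λ', the probability that |{i : 1 ≤ i ≤ q, a_{c_i} = x}| ≥ R is at most 2^{−R}. -/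
open Finset

attribute [local instance] Classical.propDecidable

/-!
Exponential-moment (Chernoff) argument with base 4. Over a product of uniform finite spaces the
number of coordinates hitting a target set is a sum of independent indicators, so
`E[4 ^ count] = ∏ i, (1 + 3 kᵢ / m) ≤ exp (3 ∑ kᵢ / m) ≤ exp (R / 2) ≤ 2 ^ R`,
where `kᵢ` is the size of the target set in coordinate `i` and `m` the size of each factor.
Markov's inequality then bounds `P(count ≥ R)` by `2 ^ R / 4 ^ R = 2 ^ (-R)`.
-/

theorem Real.exp_div_two_le_two_rpow {R : ℝ} (hR : 0 ≤ R) : Real.exp (R / 2) ≤ 2 ^ R := by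
  rw [Real.rpow_def_of_pos two_pos]
  exact Real.exp_le_exp.2 (by nlinarith [Real.log_two_gt_d9])

theorem card_filter_le_mul_rpow_le_sum_pow {α : Type*} [Fintype α] (f : α → ℕ) {z : ℝ}
    (hz : 1 ≤ z) (R : ℝ) : (#{s | R ≤ f s} : ℝ) * z ^ R ≤ ∑ s, z ^ f s := by
  calc (#{s | R ≤ f s} : ℝ) * z ^ R = #{s | R ≤ f s} • z ^ R := (nsmul_eq_mul _ _).symm
    _ ≤ ∑ s ∈ {s | R ≤ f s}, z ^ f s := by
        refine card_nsmul_le_sum _ _ _ fun s hs => ?_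
        rw [← Real.rpow_natCast]
        exact Real.rpow_le_rpow_of_exponent_le hz (mem_filter.1 hs).2
    _ ≤ ∑ s, z ^ f s :=
        sum_le_sum_of_subset_of_nonneg (subset_univ _) fun s _ _ => by positivity

section ProductCounting

variable {ι β : Type*} [Fintype ι] [Fintype β]

theorem sum_pow_card_filter_pi_eq_prod [DecidableEq ι] {A : Type*} [CommRing A]
    (P : ι → β → Prop) (z : A) :
    ∑ s : ι → β, z ^ #{i | P i (s i)} =
      ∏ i, ((Fintype.card β : A) + (z - 1) * #{t | P i t}) := by
  have hfactor : ∀ s : ι → β, z ^ #{i | P i (s i)} = ∏ i, if P i (s i) then z else 1 := by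
    intro s
    rw [prod_ite, prod_const_one, mul_one, prod_const]
  have hcoord : ∀ i, ∑ t, (if P i t then z else 1) =
      (Fintype.card β : A) + (z - 1) * #{t | P i t} := by
    intro i
    rw [sum_ite, sum_const, sum_const, nsmul_eq_mul, nsmul_eq_mul, mul_one,
      ← card_univ, ← card_filter_add_card_filter_not (s := univ) (fun t => P i t)]
    push_cast
    ring
  calc ∑ s : ι → β, z ^ #{i | P i (s i)}
        = ∑ s : ι → β, ∏ i, if P i (s i) then z else 1 :=
        Fintype.sum_congr _ _ hfactor
    _ = ∏ i, ∑ t, if P i t then z else 1 :=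
        (Fintype.prod_sum fun i t => if P i t then z else 1).symm
    _ = _ := prod_congr rfl fun i _ => hcoord i

theorem prod_add_le_pow_mul_exp_sum_div {m : ℝ} (hm : 0 < m) (k : ι → ℝ)
    (hk : ∀ i, 0 ≤ m + k i) :
    ∏ i, (m + k i) ≤ m ^ Fintype.card ι * Real.exp ((∑ i, k i) / m) := by
  have hfactor : ∀ i, m + k i ≤ m * Real.exp (k i / m) := fun i =>
    calc m + k i = m * (k i / m + 1) := by field_simp; ring
      _ ≤ m * Real.exp (k i / m) := by gcongr; exact Real.add_one_le_exp _
  calc ∏ i, (m + k i) ≤ ∏ i, m * Real.exp (k i / m) :=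
        prod_le_prod (fun i _ => hk i) fun i _ => hfactor i
    _ = m ^ Fintype.card ι * Real.exp ((∑ i, k i) / m) := by
        rw [prod_mul_distrib, prod_const, ← Real.exp_sum, sum_div, card_univ]

theorem card_filter_le_card_filter_pi_le_pow_mul_two_rpow_neg [DecidableEq ι]
    (P : ι → β → Prop) (hβ : 0 < Fintype.card β) {R : ℝ}
    (hR : 6 * ((∑ i, #{t | P i t} : ℕ) : ℝ) / Fintype.card β ≤ R) :
    (#{s : ι → β | R ≤ #{i | P i (s i)}} : ℝ) ≤
      (Fintype.card β : ℝ) ^ Fintype.card ι * 2 ^ (-R) := by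
  set m : ℝ := (Fintype.card β : ℝ)
  have hm : 0 < m := Nat.cast_pos.2 hβ
  have hR0 : 0 ≤ R := le_trans (by positivity) hR
  have hmean : (∑ i, 3 * (#{t | P i t} : ℝ)) / m ≤ R / 2 := by
    push_cast at hR
    calc (∑ i, 3 * (#{t | P i t} : ℝ)) / m = 6 * (∑ i, (#{t | P i t} : ℝ)) / m / 2 := by
          rw [← mul_sum]; ring
      _ ≤ R / 2 := by gcongr
  have hmarkov : (#{s : ι → β | R ≤ #{i | P i (s i)}} : ℝ) * 2 ^ R * 2 ^ R ≤
      m ^ Fintype.card ι * 2 ^ R :=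
    calc (#{s : ι → β | R ≤ #{i | P i (s i)}} : ℝ) * 2 ^ R * 2 ^ R
        = #{s : ι → β | R ≤ #{i | P i (s i)}} * (4 : ℝ) ^ R := by
          rw [mul_assoc, ← Real.mul_rpow zero_le_two zero_le_two]; norm_num
      _ ≤ ∑ s : ι → β, (4 : ℝ) ^ #{i | P i (s i)} :=
          card_filter_le_mul_rpow_le_sum_pow _ (by norm_num) R
      _ = ∏ i, (m + 3 * #{t | P i t}) := by
          rw [sum_pow_card_filter_pi_eq_prod]; norm_num [m]
      _ ≤ m ^ Fintype.card ι * Real.exp ((∑ i, 3 * (#{t | P i t} : ℝ)) / m) :=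
          prod_add_le_pow_mul_exp_sum_div hm _ fun i => by positivity
      _ ≤ m ^ Fintype.card ι * 2 ^ R := by
          gcongr
          exact (Real.exp_le_exp.2 hmean).trans (Real.exp_div_two_le_two_rpow hR0)
  have h2R : (0 : ℝ) < 2 ^ R := by positivity
  rw [Real.rpow_neg zero_le_two, ← div_eq_mul_inv, le_div_iff₀ h2R]
  exact le_of_mul_le_mul_right hmarkov h2R

end ProductCounting

theorem sum_card_filter_block_eq (P : ℕ → Prop) (q lam : ℕ) :
    ∑ i : Fin q, #{t : Fin lam | P (i * lam + t)} = #{p ∈ range (q * lam) | P p} := by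
  simp only [card_filter]
  rw [← Fin.sum_univ_eq_sum_range, ← Fintype.sum_prod_type',
    ← (finProdFinEquiv : Fin q × Fin lam ≃ _).sum_comp]
  refine sum_congr rfl fun p _ => ?_
  simp only [finProdFinEquiv_apply_val]
  rw [add_comm, mul_comm]

theorem card_filter_Icc_one_eq_card_filter_range (P : ℕ → Prop) (N : ℕ) :
    #{p ∈ Icc 1 N | P p} = #{p ∈ range N | P (p + 1)} := by
  simp only [card_filter]
  rw [range_eq_Ico, sum_Ico_add' (fun p => if P p then 1 else 0), zero_add,
    Ico_add_one_right_eq_Icc]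

theorem statement_10_general {S : Type} (lam q : ℕ) (hlam : 0 < lam)
    (a : ℕ → S) (x : S) (R : ℝ)
    (hR : 6 * (((Finset.Icc 1 (q * lam)).filter fun p => a p = x).card : ℝ) / (lam : ℝ) ≤ R) :
    ((Finset.univ.filter fun s : Fin q → Fin lam =>
          R ≤ ((Finset.univ.filter fun i : Fin q =>
            a ((i : ℕ) * lam + (s i : ℕ) + 1) = x).card : ℝ)).card : ℝ)
        / (lam : ℝ) ^ q ≤ (2 : ℝ) ^ (-R) := by
  have hblocks : ∑ i : Fin q, #{t : Fin lam | a (i * lam + t + 1) = x} =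
      #{p ∈ Icc 1 (q * lam) | a p = x} := by
    rw [card_filter_Icc_one_eq_card_filter_range]
    exact sum_card_filter_block_eq (fun p => a (p + 1) = x) q lam
  have hbound := card_filter_le_card_filter_pi_le_pow_mul_two_rpow_neg
    (fun (i : Fin q) (t : Fin lam) => a (i * lam + t + 1) = x)
    (by simpa using hlam) (R := R) (by simpa only [hblocks, Fintype.card_fin] using hR)
  rw [Fintype.card_fin, Fintype.card_fin] at hbound
  exact div_le_of_le_mul₀ (by positivity) (by positivity) (hbound.trans_eq (mul_comm _ _))

/-- blockwise sampling sees a fixed element few times. The positions are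
`1, …, q·λ'`; `c_i = (i−1)·λ' + s_i + 1` is a uniform point of the `i`-th block,
independently across blocks (uniform counting measure over `s : Fin q → Fin λ'`).
If `x` appears `n_x` times among `a_1, …, a_{qλ'}` then for every real `R ≥ 6·n_x/λ'`,
the probability that `x` is sampled at least `R` times is at most `2^{−R}`. -/
theorem statement_10 {S : Type} (lam q : ℕ) (hlam : 0 < lam) (hq : 0 < q)
    (a : ℕ → S) (x : S) (R : ℝ)
    (hR : 6 * (((Finset.Icc 1 (q * lam)).filter fun p => a p = x).card : ℝ) / (lam : ℝ) ≤ R) :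
    ((Finset.univ.filter fun s : Fin q → Fin lam =>
          R ≤ ((Finset.univ.filter fun i : Fin q =>
            a ((i : ℕ) * lam + (s i : ℕ) + 1) = x).card : ℝ)).card : ℝ)
        / (lam : ℝ) ^ q ≤ (2 : ℝ) ^ (-R) :=
  statement_10_general lam q hlam a x R hR
end

section
/- Let λ, ℓ, n, t be positive integers with n ≥ 6 and t·log₂ n ≥ 2λ. Let a_1, …, a_ℓ be a sequence of elements of an arbitrary set S, and let x ∈ S be an element that appears at most t times in the sequence. Let r_1, r_2, … be i.i.d. uniform random variables on {0, …, λ−1}, and let the connector positions be b_j = j·λ + r_1 + ⋯ + r_j for those j with b_j ≤ ℓ. Then with probability at least 1 − 1/n², the number of connector positions b_j with a_{b_j} = x is at most t·(log₂ n)²/λ. -/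
open Finset

attribute [local instance] Classical.propDecidable

/-!
Conditioned on the first shift `r₁`, the later connectors form a copy of the whole process
translated by `λ + r₁`. By induction on the length, a fixed set of `k` positions is covered by
connectors with probability at most `λ⁻ᵏ`: a point of the set below `2λ` can only be the first
connector, which pins down `r₁`, and otherwise the first connector misses the set. If more than
`θ = t (log₂ n)² / λ` connectors land on occurrences of `x`, then some `k = ⌊θ⌋ + 1` of the at
most `t` occurrences are all covered, and the union bound gives probability at most
`C(t, k) λ⁻ᵏ ≤ (e t / (k λ))ᵏ ≤ (e / (log₂ n)²)ᵏ ≤ 2⁻ᵏ ≤ 1/n²`, because `(log₂ n)² ≥ 2e` for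
`n ≥ 6` and `k > θ ≥ 2 log₂ n` by the hypothesis `t log₂ n ≥ 2λ`.
-/
theorem Fin.sum_Iic_succ {M : Type*} [AddCommMonoid M] {m : ℕ} (f : Fin (m + 1) → M)
    (j : Fin m) : ∑ i ∈ Iic j.succ, f i = f 0 + ∑ i ∈ Iic j, f i.succ := by
  change _ = f 0 + ∑ i ∈ Iic j, f (Fin.succEmb m i)
  rw [← sum_map (Iic j) (Fin.succEmb m) f, Fin.map_succEmb_Iic,
    add_sum_Ioc_eq_sum_Icc (Fin.zero_le _)]
  rfl

theorem card_filter_fin_cons {α : Type*} [Fintype α] {m : ℕ} (P : (Fin (m + 1) → α) → Prop)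
    [DecidablePred P] :
    #{r | P r} = ∑ c, #{r : Fin m → α | P (Fin.cons c r)} := by
  simp only [card_filter]
  rw [← (Fin.consEquiv fun _ => α).sum_comp, Fintype.sum_prod_type]
  rfl

/-- The paper's `b_{j+1}`: connector indices start at `0` here. -/
def connector (lam : ℕ) {m : ℕ} (r : Fin m → Fin lam) (j : Fin m) : ℕ :=
  ((j : ℕ) + 1) * lam + ∑ i ∈ Iic j, (r i : ℕ)

section connector

variable {lam m : ℕ}

theorem le_connector (r : Fin m → Fin lam) (j : Fin m) : lam ≤ connector lam r j :=
  (Nat.le_mul_of_pos_left lam j.succ_pos).trans (Nat.le_add_right _ _)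

theorem connector_strictMono (hlam : 0 < lam) (r : Fin m → Fin lam) :
    StrictMono (connector lam r) := fun _ _ hjj' =>
  Nat.add_lt_add_of_lt_of_le (Nat.mul_lt_mul_of_pos_right (Nat.succ_lt_succ hjj') hlam)
    (sum_le_sum_of_subset (Iic_subset_Iic.2 hjj'.le))

@[simp]
theorem connector_cons_zero (c : Fin lam) (r : Fin m → Fin lam) :
    connector lam (Fin.cons c r : Fin (m + 1) → Fin lam) 0 = lam + c := by
  simp [connector, show Iic (0 : Fin (m + 1)) = {0} from Iic_bot]

@[simp]
theorem connector_cons_succ (c : Fin lam) (r : Fin m → Fin lam) (j : Fin m) :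
    connector lam (Fin.cons c r : Fin (m + 1) → Fin lam) j.succ = lam + c + connector lam r j := by
  simp only [connector, Fin.sum_Iic_succ, Fin.cons_zero, Fin.cons_succ, Fin.val_succ]
  ring

theorem exists_connector_cons_eq_iff (c : Fin lam) (r : Fin m → Fin lam) (p : ℤ) :
    (∃ j, (connector lam (Fin.cons c r : Fin (m + 1) → Fin lam) j : ℤ) = p) ↔
      p = lam + c ∨ ∃ j, (connector lam r j : ℤ) = p - (lam + c) := by
  simp only [Fin.exists_fin_succ, connector_cons_zero, connector_cons_succ]
  push_cast
  constructor <;> rintro (h | ⟨j, hj⟩) <;> first | (left; omega) | (right; exact ⟨j, by omega⟩)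

end connector

def coveringShifts (lam m : ℕ) (T : Finset ℤ) : Finset (Fin m → Fin lam) :=
  {r | ∀ p ∈ T, ∃ j, (connector lam r j : ℤ) = p}

section coveringShifts

variable {lam m : ℕ}

theorem le_of_mem_coveringShifts {T : Finset ℤ} {r : Fin m → Fin lam}
    (hr : r ∈ coveringShifts lam m T) {p : ℤ} (hp : p ∈ T) : (lam : ℤ) ≤ p := by
  obtain ⟨j, rfl⟩ := (mem_filter.1 hr).2 p hp
  exact_mod_cast le_connector r j

theorem card_coveringShifts_succ (T : Finset ℤ) :
    #(coveringShifts lam (m + 1) T) =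
      ∑ c : Fin lam, #(coveringShifts lam m ((T.erase (lam + c)).image (· - (lam + c)))) := by
  rw [coveringShifts, card_filter_fin_cons]
  refine sum_congr rfl fun c _ => congrArg card (filter_congr fun r _ => ?_)
  simp only [forall_mem_image, mem_erase, exists_connector_cons_eq_iff]
  exact ⟨fun h p ⟨hpc, hp⟩ => (h p hp).resolve_left hpc,
    fun h p hp => or_iff_not_imp_left.2 fun hpc => h ⟨hpc, hp⟩⟩

theorem card_coveringShifts_mul_pow_le (lam : ℕ) :
    ∀ (m : ℕ) (T : Finset ℤ), #(coveringShifts lam m T) * lam ^ #T ≤ lam ^ m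
  | 0, T => by
    rcases T.eq_empty_or_nonempty with rfl | ⟨p, hp⟩
    · simpa using (card_le_univ _).trans (by simp)
    · have : coveringShifts lam 0 T = ∅ :=
        filter_eq_empty_iff.2 fun r _ h => (h p hp).elim fun j _ => j.elim0
      simp [this]
  | m + 1, T => by
    have ih := fun c : Fin lam => card_coveringShifts_mul_pow_le lam m
      ((T.erase (lam + c)).image (· - (lam + c)))
    simp only [card_image_of_injective _ sub_left_injective] at ih
    rw [card_coveringShifts_succ, sum_mul]
    by_cases hsmall : ∃ p ∈ T, p < 2 * lam
    · -- every connector but the first, `lam + c`, lies beyond `2 * lam`, so `p` determines `c`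
      obtain ⟨p, hpT, hp⟩ := hsmall
      have hfix : ∀ c : Fin lam, #(coveringShifts lam m
          ((T.erase (lam + c)).image (· - (lam + c)))) * lam ^ #T ≠ 0 → (lam + c : ℤ) = p := by
        intro c hc
        by_contra hpc
        obtain ⟨r, hr⟩ := card_ne_zero.1 (left_ne_zero_of_mul hc)
        have := le_of_mem_coveringShifts hr (mem_image_of_mem _ (mem_erase.2 ⟨Ne.symm hpc, hpT⟩))
        omega
      have hunique : #{c : Fin lam | (lam + c : ℤ) = p} ≤ 1 :=
        card_le_one.2 fun c hc c' hc' => by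
          simp only [mem_filter, mem_univ, true_and] at hc hc'
          exact Fin.ext (by omega)
      rw [← sum_filter_of_ne fun c _ => hfix c]
      calc _ ≤ ∑ _c ∈ {c : Fin lam | (lam + c : ℤ) = p}, lam ^ (m + 1) :=
            sum_le_sum fun c hc => by
              have ihc := ih c
              rw [(mem_filter.1 hc).2] at ihc ⊢
              rw [← card_erase_add_one hpT, pow_succ, ← mul_assoc, pow_succ]
              exact Nat.mul_le_mul_right _ ihc
        _ ≤ lam ^ (m + 1) := by
          rw [sum_const, smul_eq_mul]
          exact (Nat.mul_le_mul_right _ hunique).trans_eq (one_mul _)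
    · push Not at hsmall
      have hnotin : ∀ c : Fin lam, (lam + c : ℤ) ∉ T := fun c hc => by
        have := hsmall _ hc
        omega
      calc _ ≤ ∑ _c : Fin lam, lam ^ m := sum_le_sum fun c _ => by
              simpa [erase_eq_of_notMem (hnotin c)] using ih c
        _ = lam ^ (m + 1) := by simp [pow_succ, mul_comm]

end coveringShifts

theorem card_filter_le_card_connector_mem_mul_pow_le {lam : ℕ} (hlam : 0 < lam) (m : ℕ)
    (B : Finset ℕ) (k : ℕ) :
    #{r : Fin m → Fin lam | k ≤ #{j | connector lam r j ∈ B}} * lam ^ k ≤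
      (#B).choose k * lam ^ m := by
  have hcover : ({r | k ≤ #{j | connector lam r j ∈ B}} : Finset (Fin m → Fin lam)) ⊆
      (B.powersetCard k).biUnion fun U => coveringShifts lam m (U.map Nat.castEmbedding) := by
    intro r hr
    have hk : k ≤ #(({j | connector lam r j ∈ B} : Finset (Fin m)).image (connector lam r)) := by
      rw [card_image_of_injective _ (connector_strictMono hlam r).injective]
      exact (mem_filter.1 hr).2
    obtain ⟨U, hU, rfl⟩ := exists_subset_card_eq hk
    refine mem_biUnion.2 ⟨U, mem_powersetCard.2 ⟨fun p hp => ?_, rfl⟩,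
      mem_filter.2 ⟨mem_univ _, fun p hp => ?_⟩⟩
    · obtain ⟨j, hj, rfl⟩ := mem_image.1 (hU hp)
      exact (mem_filter.1 hj).2
    · obtain ⟨q, hq, rfl⟩ := mem_map.1 hp
      obtain ⟨j, -, rfl⟩ := mem_image.1 (hU hq)
      exact ⟨j, rfl⟩
  calc _ ≤ (∑ U ∈ B.powersetCard k, #(coveringShifts lam m (U.map Nat.castEmbedding))) * lam ^ k :=
        Nat.mul_le_mul_right _ ((card_le_card hcover).trans card_biUnion_le)
    _ ≤ ∑ _U ∈ B.powersetCard k, lam ^ m := by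
        rw [sum_mul]
        refine sum_le_sum fun U hU => ?_
        simpa [(mem_powersetCard.1 hU).2] using
          card_coveringShifts_mul_pow_le lam m (U.map Nat.castEmbedding)
    _ = _ := by rw [sum_const, card_powersetCard, smul_eq_mul]

theorem card_filter_le_card_connector_mem_mul_le {lam : ℕ} (hlam : 0 < lam) (m : ℕ)
    (B : Finset ℕ) {k N : ℕ} (hN : (#B).choose k * N ≤ lam ^ k) :
    #{r : Fin m → Fin lam | k ≤ #{j | connector lam r j ∈ B}} * N ≤ lam ^ m := by
  refine Nat.le_of_mul_le_mul_right ?_ (pow_pos hlam k)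
  calc _ = #{r : Fin m → Fin lam | k ≤ #{j | connector lam r j ∈ B}} * lam ^ k * N := by ring
    _ ≤ (#B).choose k * lam ^ m * N :=
        Nat.mul_le_mul_right _ (card_filter_le_card_connector_mem_mul_pow_le hlam m B k)
    _ = (#B).choose k * N * lam ^ m := by ring
    _ ≤ lam ^ k * lam ^ m := Nat.mul_le_mul_right _ hN
    _ = lam ^ m * lam ^ k := by ring

theorem Nat.choose_le_exp_one_mul_div_pow (t : ℕ) {k : ℕ} (hk : 0 < k) :
    (t.choose k : ℝ) ≤ (Real.exp 1 * t / k) ^ k := by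
  have hfact : (k : ℝ) ^ k ≤ Real.exp 1 ^ k * k.factorial := by
    rw [Real.exp_one_pow, ← div_le_iff₀ (by positivity)]
    exact Real.pow_div_factorial_le_exp (k : ℝ) k.cast_nonneg k
  calc (t.choose k : ℝ) ≤ t ^ k / k.factorial := Nat.choose_le_pow_div k t
    _ ≤ (Real.exp 1 * t / k) ^ k := by
      rw [div_pow, mul_pow, div_le_div_iff₀ (by positivity) (by positivity), mul_comm,
        mul_right_comm]
      exact mul_le_mul_of_nonneg_right hfact (by positivity)

theorem Nat.choose_mul_two_pow_le {t k lam : ℕ} {L : ℝ} (hk : 0 < k)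
    (hL : 2 * Real.exp 1 ≤ L ^ 2) (htk : t * L ^ 2 ≤ lam * k) :
    (t.choose k : ℝ) * 2 ^ k ≤ lam ^ k :=
  calc (t.choose k : ℝ) * 2 ^ k ≤ (Real.exp 1 * t / k) ^ k * 2 ^ k :=
        mul_le_mul_of_nonneg_right (t.choose_le_exp_one_mul_div_pow hk) (by positivity)
    _ = (2 * Real.exp 1 * t / k) ^ k := by rw [← mul_pow]; ring
    _ ≤ lam ^ k := by
      refine pow_le_pow_left₀ (by positivity) ?_ k
      rw [div_le_iff₀ (by positivity)]
      nlinarith [mul_le_mul_of_nonneg_right hL t.cast_nonneg]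

theorem two_mul_logb_eq_logb_sq (x : ℝ) : 2 * Real.logb 2 x = Real.logb 2 (x ^ 2) := by
  rw [Real.logb_pow, Nat.cast_ofNat]

theorem two_mul_exp_one_le_logb_sq {n : ℕ} (hn : 6 ≤ n) :
    2 * Real.exp 1 ≤ Real.logb 2 n ^ 2 := by
  have h5 : 5 ≤ 2 * Real.logb 2 n := by
    rw [two_mul_logb_eq_logb_sq, Real.le_logb_iff_rpow_le one_lt_two (by positivity),
      show (5 : ℝ) = (5 : ℕ) by norm_num, Real.rpow_natCast]
    have : (6 : ℝ) ≤ n := by exact_mod_cast hn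
    nlinarith
  nlinarith [Real.exp_one_lt_d9]

theorem sq_le_two_pow_of_two_mul_logb_le {n k : ℕ} (h : 2 * Real.logb 2 n ≤ k) :
    (n : ℝ) ^ 2 ≤ 2 ^ k := by
  rcases n.eq_zero_or_pos with rfl | hn
  · simp
  rw [two_mul_logb_eq_logb_sq] at h
  calc (n : ℝ) ^ 2 = 2 ^ Real.logb 2 ((n : ℝ) ^ 2) :=
        (Real.rpow_logb two_pos one_lt_two.ne' (by positivity)).symm
    _ ≤ 2 ^ (k : ℝ) := Real.rpow_le_rpow_of_exponent_le one_le_two h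
    _ = 2 ^ k := Real.rpow_natCast 2 k

theorem Nat.choose_floor_add_one_mul_sq_le {lam n t : ℕ} (hlam : 0 < lam) (hn : 6 ≤ n)
    (hcond : 2 * (lam : ℝ) ≤ t * Real.logb 2 n) :
    t.choose (⌊t * Real.logb 2 n ^ 2 / lam⌋₊ + 1) * n ^ 2 ≤
      lam ^ (⌊t * Real.logb 2 n ^ 2 / lam⌋₊ + 1) := by
  set L := Real.logb 2 n
  set k := ⌊t * L ^ 2 / lam⌋₊ + 1
  have hlamR : (0 : ℝ) < lam := by exact_mod_cast hlam
  have hk : t * L ^ 2 / lam < k := by simpa [k] using Nat.lt_floor_add_one (t * L ^ 2 / lam)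
  have htk : t * L ^ 2 ≤ lam * k := by
    rw [div_lt_iff₀ hlamR] at hk
    linarith
  have hLk : 2 * L ≤ k := by
    refine le_trans ?_ hk.le
    rw [le_div_iff₀ hlamR]
    nlinarith [Real.logb_nonneg one_lt_two (by exact_mod_cast (by omega : 1 ≤ n) : (1 : ℝ) ≤ n)]
  rw [← Nat.cast_le (α := ℝ)]
  push_cast
  calc (t.choose k : ℝ) * n ^ 2 ≤ t.choose k * 2 ^ k := by
        gcongr
        exact sq_le_two_pow_of_two_mul_logb_le hLk
    _ ≤ lam ^ k := Nat.choose_mul_two_pow_le (by omega) (two_mul_exp_one_le_logb_sq hn) htk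

theorem one_sub_one_div_le_card_filter_div_card {α : Type*} [Fintype α] [Nonempty α]
    (P : α → Prop) {N : ℝ} (hN : 0 < N) (h : #{a | ¬P a} * N ≤ Fintype.card α) :
    1 - 1 / N ≤ #{a | P a} / Fintype.card α := by
  have hsum : (#{a | P a} : ℝ) + #{a | ¬P a} = Fintype.card α := by
    exact_mod_cast card_filter_add_card_filter_not (s := univ) P
  have hcard : (0 : ℝ) < Fintype.card α := by exact_mod_cast Fintype.card_pos
  have hbad : (#{a | ¬P a} : ℝ) ≤ Fintype.card α / N := (le_div_iff₀ hN).2 h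
  calc 1 - 1 / N = (Fintype.card α - Fintype.card α / N) / Fintype.card α := by field_simp
    _ ≤ #{a | P a} / Fintype.card α := by gcongr; linarith

/-- The i.i.d. shifts are modelled by the uniform counting measure on `r : Fin ℓ → Fin λ`, which
determines every connector position `b_j ≤ ℓ`. -/
theorem statement_11_general {S : Type} (lam ell n t : ℕ) (hlam : 0 < lam)
    (hn : 6 ≤ n)
    (hcond : 2 * (lam : ℝ) ≤ (t : ℝ) * Real.logb 2 n)
    (a : ℕ → S) (x : S)
    (hx : (((Finset.Icc 1 ell).filter fun p => a p = x).card) ≤ t) :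
    1 - 1 / (n : ℝ) ^ 2 ≤
      ((Finset.univ.filter fun r : Fin ell → Fin lam =>
          ((Finset.univ.filter fun j : Fin ell =>
              ((j : ℕ) + 1) * lam + (∑ i ∈ Finset.Iic j, (r i : ℕ)) ≤ ell ∧
                a (((j : ℕ) + 1) * lam + ∑ i ∈ Finset.Iic j, (r i : ℕ)) = x).card : ℝ)
            ≤ (t : ℝ) * (Real.logb 2 n) ^ 2 / (lam : ℝ)).card : ℝ)
        / (lam : ℝ) ^ ell := by
  set θ : ℝ := t * Real.logb 2 n ^ 2 / lam
  set B := (Icc 1 ell).filter fun p => a p = x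
  have hchoose : (#B).choose (⌊θ⌋₊ + 1) * n ^ 2 ≤ lam ^ (⌊θ⌋₊ + 1) :=
    (Nat.mul_le_mul_right _ (Nat.choose_le_choose _ hx)).trans
      (Nat.choose_floor_add_one_mul_sq_le hlam hn hcond)
  have hmem (r : Fin ell → Fin lam) (j : Fin ell) :
      connector lam r j ∈ B ↔ connector lam r j ≤ ell ∧ a (connector lam r j) = x := by
    simp [B, mem_Icc, show 1 ≤ connector lam r j from hlam.trans_le (le_connector r j)]
  have hsub : ({r | ¬(#{j | connector lam r j ≤ ell ∧ a (connector lam r j) = x} : ℝ) ≤ θ} :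
      Finset (Fin ell → Fin lam)) ⊆
      ({r | ⌊θ⌋₊ + 1 ≤ #{j | connector lam r j ∈ B}} : Finset (Fin ell → Fin lam)) := by
    intro r hr
    rw [mem_filter, not_le, ← Nat.floor_lt (by positivity), Nat.lt_iff_add_one_le] at hr
    simpa only [mem_filter, mem_univ, true_and, hmem] using hr.2
  have : Nonempty (Fin lam) := ⟨⟨0, hlam⟩⟩
  rw [show (lam : ℝ) ^ ell = Fintype.card (Fin ell → Fin lam) by simp]
  refine one_sub_one_div_le_card_filter_div_card _ (by positivity) ?_
  have hbad := card_filter_le_card_connector_mem_mul_le hlam ell B hchoose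
  rw [Fintype.card_fun, Fintype.card_fin, Fintype.card_fin]
  exact_mod_cast (Nat.mul_le_mul_right _ (card_le_card hsub)).trans hbad

/-- if `x` appears at most `t` times among `a_1, …, a_ℓ`, then with
probability at least `1 − 1/n²` (over the i.i.d. uniform shifts `r_i ∈ {0,…,λ−1}`,
modelled by the uniform counting measure on `r : Fin ℓ → Fin λ`, which determines all
connector positions `b_j = (j+1)·λ + r_1 + ⋯ + r_{j+1} ≤ ℓ`), the number of connector
positions `b_j ≤ ℓ` with `a_{b_j} = x` is at most `t·(log₂ n)²/λ`. -/
theorem statement_11 {S : Type} (lam ell n t : ℕ) (hlam : 0 < lam) (hell : 0 < ell)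
    (hn : 6 ≤ n) (ht : 0 < t)
    (hcond : 2 * (lam : ℝ) ≤ (t : ℝ) * Real.logb 2 n)
    (a : ℕ → S) (x : S)
    (hx : (((Finset.Icc 1 ell).filter fun p => a p = x).card) ≤ t) :
    1 - 1 / (n : ℝ) ^ 2 ≤
      ((Finset.univ.filter fun r : Fin ell → Fin lam =>
          ((Finset.univ.filter fun j : Fin ell =>
              ((j : ℕ) + 1) * lam + (∑ i ∈ Finset.Iic j, (r i : ℕ)) ≤ ell ∧
                a (((j : ℕ) + 1) * lam + ∑ i ∈ Finset.Iic j, (r i : ℕ)) = x).card : ℝ)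
            ≤ (t : ℝ) * (Real.logb 2 n) ^ 2 / (lam : ℝ)).card : ℝ)
        / (lam : ℝ) ^ ell :=
  statement_11_general lam ell n t hlam hn hcond a x hx
end
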